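/- arXiv:2506.10827 — 6 statements merged into one kernel-verified Lean document; each statement's English description precedes it below -/
import Mathlib

section
/- Let (Q,m) be a noetherian local ring, let x₁,…,x_d ∈ m be a regular sequence on Q, and let f₁,…,f_n be monomials on x (each f_j = ∏_l x_l^{(a_j)_l} with a_j ∈ ℕ^d, a_j ≠ 0). Fix 1 ≤ c ≤ n and suppose that for every 1 ≤ i ≤ c and every j ∈ {1,…,n} with j ≠ i, the supports of f_i and f_j are disjoint. Then f₁,…,f_c is a regular sequence on the quotient ring Q/(f_{c+1},…,f_n). -/
/-!
Permuting the regular sequence, each `x l` is a nonzerodivisor modulo the ideal generated by any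
set `s` of the other variables. A monomial is a nonzerodivisor as soon as each of its variables
is, so it suffices that `x l` is a nonzerodivisor modulo `(x_s) + (x^γ : γ ∈ H)` whenever no
`γ ∈ H` involves `l` or a variable of `s`. This goes by induction on the total degree of `H`:
pick a variable `x₀` occurring in some `γ ∈ H` and write `(x^γ : γ ∈ H) = (B) + x₀ (A')`, where
`B` collects the monomials of `H` free of `x₀` and `A'` the others divided by `x₀`. With
`K = (x_s) + (B)`, an element `u` is a nonzerodivisor modulo `K + x₀ L` once it is one modulo
`K + (x₀)` and modulo `K + L`, and `x₀` is one modulo `K`; for `u = x l` and `L = (A')` these are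
three instances of the induction hypothesis, each of smaller total degree.
-/

open RingTheory.Sequence IsLocalRing

section Quotient
variable {Q : Type*} [CommRing Q]

theorem isSMulRegular_quotient_sup_span_singleton_mul {K L : Ideal Q} {u y : Q}
    (hKy : IsSMulRegular (Q ⧸ (K ⊔ Ideal.span {y})) u) (hK : IsSMulRegular (Q ⧸ K) y)
    (hKL : IsSMulRegular (Q ⧸ (K ⊔ L)) u) :
    IsSMulRegular (Q ⧸ (K ⊔ Ideal.span {y} * L)) u := by
  rw [isSMulRegular_quotient_iff_mem_of_smul_mem] at hKy hK hKL ⊢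
  simp only [smul_eq_mul] at hKy hK hKL ⊢
  intro q hq
  obtain ⟨k, hk, _, hb, rfl⟩ :=
    Submodule.mem_sup.mp (hKy q (sup_le_sup_left Ideal.mul_le_left K hq))
  obtain ⟨b, rfl⟩ := Ideal.mem_span_singleton'.mp hb
  have hub : u * (b * y) ∈ K ⊔ Ideal.span {y} * L := by
    convert sub_mem hq (Submodule.mem_sup_left (K.mul_mem_left u hk)) using 1
    ring
  obtain ⟨k', hk', _, hyl, hkl⟩ := Submodule.mem_sup.mp hub
  obtain ⟨l, hl, rfl⟩ := Ideal.mem_span_singleton_mul.mp hyl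
  have hubl : u * b - l ∈ K := hK _ (by convert hk' using 1; linear_combination -hkl)
  have hb : b ∈ K ⊔ L :=
    hKL b (by simpa using add_mem (Submodule.mem_sup_left hubl) (Submodule.mem_sup_right hl))
  obtain ⟨k'', hk'', l', hl', rfl⟩ := Submodule.mem_sup.mp hb
  have hyl' : y * l' ∈ Ideal.span {y} * L := Ideal.mem_span_singleton_mul.mpr ⟨l', hl', rfl⟩
  convert add_mem (Submodule.mem_sup_left (add_mem hk (K.mul_mem_right y hk'')))
    (Submodule.mem_sup_right hyl') using 1
  ring

lemma isSMulRegular_quotient_smul_top_iff (I J : Ideal Q) (r : Q) :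
    IsSMulRegular ((Q ⧸ I) ⧸ (J • ⊤ : Submodule Q (Q ⧸ I))) r ↔
      IsSMulRegular (Q ⧸ (I ⊔ J)) r :=
  have h : (J • ⊤ : Submodule Q (Q ⧸ I)) = Submodule.map I.mkQ J := by
    rw [← Submodule.range_mkQ I, ← Submodule.map_top, ← Submodule.map_smul'', smul_eq_mul,
      Ideal.mul_top]
  (Submodule.quotEquivOfEq _ _ h ≪≫ₗ
    Submodule.quotientQuotientEquivQuotientSup I J).isSMulRegular_congr r

lemma span_image_sup_ofList_take_ofFn {n c : ℕ} (hcn : c ≤ n) (g : Fin n → Q) {i : ℕ}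
    (hi : i ≤ c) :
    Ideal.span (g '' {j | c ≤ (j : ℕ)}) ⊔
        Ideal.ofList ((List.ofFn fun k : Fin c => g (Fin.castLE hcn k)).take i) =
      Ideal.span (g '' {j | (j : ℕ) < i ∨ c ≤ j}) := by
  rw [Ideal.ofList, ← Ideal.span_union]
  congr 1
  ext r
  simp only [Set.mem_union, Set.mem_image, Set.mem_ofPred_eq, List.mem_take_iff_getElem,
    List.getElem_ofFn, List.length_ofFn]
  constructor
  · rintro (⟨j, hj, rfl⟩ | ⟨k, hk, rfl⟩)
    · exact ⟨j, Or.inr hj, rfl⟩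
    · exact ⟨_, Or.inl (lt_min_iff.mp hk).1, rfl⟩
  · rintro ⟨j, hj | hj, rfl⟩
    · exact Or.inr ⟨j, by omega, rfl⟩
    · exact Or.inl ⟨j, hj, rfl⟩

end Quotient

section Monomial
open scoped Pointwise
variable {Q ι : Type*} [CommRing Q] [Fintype ι] (x : ι → Q)

def monomialIn (γ : ι → ℕ) : Q := ∏ l, x l ^ γ l

lemma monomialIn_zero : monomialIn x 0 = 1 := by
  simp [monomialIn]

lemma monomialIn_add (γ δ : ι → ℕ) :
    monomialIn x (γ + δ) = monomialIn x γ * monomialIn x δ := by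
  simp [monomialIn, pow_add, Finset.prod_mul_distrib]

lemma monomialIn_single [DecidableEq ι] (l₀ : ι) : monomialIn x (Pi.single l₀ 1) = x l₀ := by
  rw [monomialIn, Fintype.prod_eq_single l₀ fun l hl => by simp [hl]]
  simp

lemma monomialIn_eq_mul_monomialIn_sub_single [DecidableEq ι] {γ : ι → ℕ} {l₀ : ι}
    (h : γ l₀ ≠ 0) : monomialIn x γ = x l₀ * monomialIn x (γ - Pi.single l₀ 1) := by
  have hle : Pi.single l₀ 1 ≤ γ := fun l => by
    rcases eq_or_ne l l₀ with rfl | hl <;> simp [*, Nat.one_le_iff_ne_zero]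
  conv_lhs => rw [← tsub_add_cancel_of_le hle]
  rw [monomialIn_add, monomialIn_single, mul_comm]

lemma isSMulRegular_monomialIn {M : Type*} [AddCommGroup M] [Module Q M] {γ : ι → ℕ}
    (h : ∀ l, γ l ≠ 0 → IsSMulRegular M (x l)) : IsSMulRegular M (monomialIn x γ) := by
  refine Finset.prod_induction _ _ (fun _ _ => IsSMulRegular.mul) (.one M) fun l _ => ?_
  by_cases hl : γ l = 0
  · simp only [hl, pow_zero]
    exact .one M
  · exact (h l hl).pow _

lemma isSMulRegular_quotient_sup_span_monomialIn_of_subset_zero {I : Ideal Q} {u : Q}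
    (hI : IsSMulRegular (Q ⧸ I) u) {hs : Finset (ι → ℕ)} (h : hs ⊆ {0}) :
    IsSMulRegular (Q ⧸ (I ⊔ Ideal.span (monomialIn x '' hs))) u := by
  rcases Finset.subset_singleton_iff.mp h with rfl | rfl
  · rwa [Finset.coe_empty, Set.image_empty, Ideal.span_empty, sup_bot_eq]
  · rw [Finset.coe_singleton, Set.image_singleton, monomialIn_zero, Ideal.span_singleton_one,
      sup_top_eq]
    exact (isSMulRegular_quotient_iff_mem_of_smul_mem _ _).mpr fun _ _ => Submodule.mem_top

lemma span_monomialIn_eq_sup_span_singleton_mul [DecidableEq ι] (hs : Finset (ι → ℕ))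
    (l₀ : ι) :
    Ideal.span (monomialIn x '' hs) =
      Ideal.span (monomialIn x '' (hs.filter (· l₀ = 0))) ⊔ Ideal.span {x l₀} *
        Ideal.span (monomialIn x '' ((hs.filter (· l₀ ≠ 0)).image (· - Pi.single l₀ 1))) := by
  have hA : ({x l₀} : Set Q) *
      monomialIn x '' ((hs.filter (· l₀ ≠ 0)).image (· - Pi.single l₀ 1)) =
        monomialIn x '' (hs.filter (· l₀ ≠ 0)) := by
    rw [Set.singleton_mul, Finset.coe_image, Set.image_image, Set.image_image]
    exact Set.image_congr fun γ hγ =>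
      (monomialIn_eq_mul_monomialIn_sub_single x (Finset.mem_filter.mp hγ).2).symm
  rw [Ideal.span_mul_span', hA, ← Ideal.span_union, ← Set.image_union, ← Finset.coe_union,
    Finset.filter_union_filter_not_eq]

lemma sum_sub_single_lt [DecidableEq ι] {γ : ι → ℕ} {l₀ : ι} (h : γ l₀ ≠ 0) :
    ∑ l, (γ - Pi.single l₀ 1 : ι → ℕ) l < ∑ l, γ l :=
  Finset.sum_lt_sum (fun _ _ => tsub_le_self) ⟨l₀, Finset.mem_univ _, by
    simp only [Pi.sub_apply, Pi.single_eq_same]; omega⟩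

variable {hs : Finset (ι → ℕ)} {α₀ : ι → ℕ} {l₀ : ι}

lemma sum_filter_eq_zero_lt (hα₀ : α₀ ∈ hs) (h : α₀ l₀ ≠ 0) :
    ∑ γ ∈ hs.filter (· l₀ = 0), ∑ l, γ l < ∑ γ ∈ hs, ∑ l, γ l :=
  Finset.sum_lt_sum_of_subset (Finset.filter_subset _ _) hα₀ (by simp [h])
    ((Nat.pos_of_ne_zero h).trans_le (Finset.single_le_sum (by simp) (Finset.mem_univ l₀)))
    fun _ _ _ => Nat.zero_le _

lemma sum_filter_union_image_sub_single_lt [DecidableEq ι] (hα₀ : α₀ ∈ hs) (h : α₀ l₀ ≠ 0) :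
    ∑ γ ∈ hs.filter (· l₀ = 0) ∪ (hs.filter (· l₀ ≠ 0)).image (· - Pi.single l₀ 1), ∑ l, γ l <
      ∑ γ ∈ hs, ∑ l, γ l := by
  have hA : (hs.filter (· l₀ ≠ 0)).Nonempty := ⟨α₀, Finset.mem_filter.mpr ⟨hα₀, h⟩⟩
  calc _ ≤ ∑ γ ∈ hs.filter (· l₀ = 0), ∑ l, γ l +
        ∑ γ ∈ (hs.filter (· l₀ ≠ 0)).image (· - Pi.single l₀ 1), ∑ l, γ l :=
        (Nat.le_add_right _ _).trans_eq Finset.sum_union_inter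
    _ ≤ ∑ γ ∈ hs.filter (· l₀ = 0), ∑ l, γ l +
        ∑ γ ∈ hs.filter (· l₀ ≠ 0), ∑ l, (γ - Pi.single l₀ 1 : ι → ℕ) l := by
        gcongr
        exact Finset.sum_image_le_of_nonneg fun _ _ => Nat.zero_le _
    _ < ∑ γ ∈ hs.filter (· l₀ = 0), ∑ l, γ l + ∑ γ ∈ hs.filter (· l₀ ≠ 0), ∑ l, γ l := by
        gcongr ?_ + ?_
        exact Finset.sum_lt_sum_of_nonempty hA fun γ hγ =>
          sum_sub_single_lt (Finset.mem_filter.mp hγ).2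
    _ = ∑ γ ∈ hs, ∑ l, γ l := Finset.sum_filter_add_sum_filter_not _ _ _

end Monomial

section Nonzerodivisor
variable {Q ι : Type*} [CommRing Q] [Fintype ι] [DecidableEq ι] {x : ι → Q}

theorem isSMulRegular_quotient_span_sup_span_monomialIn
    (hx : ∀ (s : Finset ι) (l : ι), l ∉ s → IsSMulRegular (Q ⧸ Ideal.span (x '' s)) (x l))
    (s : Finset ι) (hs : Finset (ι → ℕ)) {l : ι} (hl : l ∉ s) (hls : ∀ γ ∈ hs, γ l = 0)
    (hsupp : ∀ γ ∈ hs, ∀ l' ∈ s, γ l' = 0) :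
    IsSMulRegular (Q ⧸ (Ideal.span (x '' s) ⊔ Ideal.span (monomialIn x '' hs))) (x l) := by
  by_cases hnz : ∃ α₀ ∈ hs, ∃ l₀, α₀ l₀ ≠ 0
  swap
  · push Not at hnz
    exact isSMulRegular_quotient_sup_span_monomialIn_of_subset_zero x (hx s l hl)
      fun γ hγ => Finset.mem_singleton.mpr (funext (hnz γ hγ))
  obtain ⟨α₀, hα₀, l₀, hl₀⟩ := hnz
  have hl₀s : l₀ ∉ s := fun h => hl₀ (hsupp α₀ hα₀ l₀ h)
  have hll₀ : l ≠ l₀ := by rintro rfl; exact hl₀ (hls α₀ hα₀)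
  have hB := isSMulRegular_quotient_span_sup_span_monomialIn hx (insert l₀ s)
    (hs.filter (· l₀ = 0)) (l := l) (by simp [hl, hll₀])
    (fun γ hγ => hls γ (Finset.mem_of_mem_filter _ hγ)) (by
      simp only [Finset.mem_filter, Finset.mem_insert, and_imp]
      rintro γ hγ hγl₀ l' (rfl | hl')
      exacts [hγl₀, hsupp γ hγ l' hl'])
  have hB₀ := isSMulRegular_quotient_span_sup_span_monomialIn hx s
    (hs.filter (· l₀ = 0)) hl₀s (fun γ hγ => (Finset.mem_filter.mp hγ).2)
    (fun γ hγ => hsupp γ (Finset.mem_of_mem_filter _ hγ))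
  have hzero : ∀ l', (∀ γ ∈ hs, γ l' = 0) → ∀ γ ∈ hs.filter (· l₀ = 0) ∪
      (hs.filter (· l₀ ≠ 0)).image (· - Pi.single l₀ 1), γ l' = 0 := by
    simp only [Finset.mem_union, Finset.mem_filter, Finset.mem_image]
    rintro l' h _ (⟨hγ, -⟩ | ⟨γ, ⟨hγ, -⟩, rfl⟩)
    exacts [h _ hγ, by simp [h γ hγ]]
  have hBA := isSMulRegular_quotient_span_sup_span_monomialIn hx s
    (hs.filter (· l₀ = 0) ∪ (hs.filter (· l₀ ≠ 0)).image (· - Pi.single l₀ 1)) hl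
    (hzero l hls) fun γ hγ l' hl' => hzero l' (fun γ hγ => hsupp γ hγ l' hl') γ hγ
  rw [span_monomialIn_eq_sup_span_singleton_mul x hs l₀, ← sup_assoc]
  refine isSMulRegular_quotient_sup_span_singleton_mul ?_ hB₀ ?_
  · rwa [Finset.coe_insert, Set.image_insert_eq, Ideal.span_insert, sup_assoc, sup_comm] at hB
  · rwa [Finset.coe_union, Set.image_union, Ideal.span_union, ← sup_assoc] at hBA
termination_by ∑ γ ∈ hs, ∑ l, γ l
decreasing_by
  · exact sum_filter_eq_zero_lt hα₀ hl₀
  · exact sum_filter_eq_zero_lt hα₀ hl₀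
  · exact sum_filter_union_image_sub_single_lt hα₀ hl₀

theorem isSMulRegular_quotient_span_monomialIn_of_disjoint
    (hx : ∀ (s : Finset ι) (l : ι), l ∉ s → IsSMulRegular (Q ⧸ Ideal.span (x '' s)) (x l))
    (hs : Finset (ι → ℕ)) {β : ι → ℕ} (hβ : ∀ γ ∈ hs, ∀ l, β l = 0 ∨ γ l = 0) :
    IsSMulRegular (Q ⧸ Ideal.span (monomialIn x '' hs)) (monomialIn x β) := by
  refine isSMulRegular_monomialIn x fun l hl => ?_
  have h := isSMulRegular_quotient_span_sup_span_monomialIn hx ∅ hs (Finset.notMem_empty l)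
    (fun γ hγ => (hβ γ hγ l).resolve_left hl) (by simp)
  rwa [Finset.coe_empty, Set.image_empty, Ideal.span_empty, bot_sup_eq] at h

end Nonzerodivisor

theorem RingTheory.Sequence.IsRegular.isSMulRegular_quotient_span_image {Q : Type*} [CommRing Q]
    [IsLocalRing Q] [IsNoetherianRing Q] {d : ℕ} {x : Fin d → Q} (hx : IsRegular Q (List.ofFn x))
    (s : Finset (Fin d)) {l : Fin d} (hl : l ∉ s) :
    IsSMulRegular (Q ⧸ Ideal.span (x '' s)) (x l) := by
  have hperm : (List.ofFn x).Perm
      (s.toList.map x ++ x l :: (Finset.univ \ insert l s).toList.map x) := by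
    rw [List.ofFn_eq_map, ← List.map_cons, ← List.map_append]
    refine List.Perm.map x ((List.perm_ext_iff_of_nodup (List.nodup_finRange d) ?_).mpr ?_)
    · simp only [List.nodup_append, List.nodup_cons, Finset.nodup_toList, List.mem_cons,
        Finset.mem_toList, Finset.mem_sdiff, Finset.mem_insert]
      grind
    · intro a
      simp only [List.mem_finRange, List.mem_append, List.mem_cons, Finset.mem_toList, true_iff]
      grind
  have h := ((isWeaklyRegular_append_iff Q _ _).mp
    (IsLocalRing.isRegular_of_perm hx hperm).toIsWeaklyRegular).2
  rw [isWeaklyRegular_cons_iff] at h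
  have hI : (Ideal.ofList (s.toList.map x) • ⊤ : Submodule Q Q) = Ideal.span (x '' s) := by
    rw [smul_eq_mul, Ideal.mul_top, Ideal.ofList]
    congr
    ext
    simp
  rw [hI] at h
  exact h.1

theorem monomials_regular_sequence_of_disjoint_supports_general
    {Q : Type*} [CommRing Q] [IsNoetherianRing Q] [IsLocalRing Q]
    {d n : ℕ} (x : Fin d → Q) (hxm : ∀ l, x l ∈ maximalIdeal Q)
    (hx : IsRegular Q (List.ofFn x))
    (a : Fin n → Fin d → ℕ) (ha : ∀ j, a j ≠ 0)
    (f : Fin n → Q) (hf : ∀ j, f j = ∏ l, x l ^ a j l)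
    (c : ℕ) (hcn : c ≤ n)
    (hdisj : ∀ i j : Fin n, (i : ℕ) < c → j ≠ i → ∀ l, a i l = 0 ∨ a j l = 0) :
    IsRegular (Q ⧸ Ideal.span (f '' {j : Fin n | c ≤ (j : ℕ)}))
      (List.ofFn fun i : Fin c => f (Fin.castLE hcn i)) := by
  obtain rfl : f = fun j => monomialIn x (a j) := funext hf
  have hfm : ∀ j, monomialIn x (a j) ∈ maximalIdeal Q := fun j => by
    obtain ⟨l, hl⟩ := Function.ne_iff.mp (ha j)
    rw [monomialIn_eq_mul_monomialIn_sub_single x hl]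
    exact Ideal.mul_mem_right _ _ (hxm l)
  have : Nontrivial (Q ⧸ Ideal.span ((fun j => monomialIn x (a j)) '' {j | c ≤ (j : ℕ)})) :=
    Ideal.Quotient.nontrivial_iff.mpr (ne_top_of_le_ne_top (maximalIdeal.isMaximal Q).ne_top
      (Ideal.span_le.mpr (by rintro _ ⟨j, -, rfl⟩; exact hfm j)))
  refine IsRegular.of_isWeaklyRegular_of_mem_maximalIdeal _ ?_ ((isWeaklyRegular_iff _ _).mpr ?_)
  · intro r hr
    obtain ⟨k, rfl⟩ := (List.mem_ofFn' _ r).mp hr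
    exact hfm _
  intro i hi
  rw [List.length_ofFn] at hi
  rw [isSMulRegular_quotient_smul_top_iff, span_image_sup_ofList_take_ofFn hcn _ hi.le,
    List.getElem_ofFn, ← Set.image_image (monomialIn x) a, ← Finset.coe_filter_univ,
    ← Finset.coe_image]
  refine isSMulRegular_quotient_span_monomialIn_of_disjoint
    (fun s l hl => hx.isSMulRegular_quotient_span_image s hl) _ ?_
  simp only [Finset.mem_image, Finset.mem_filter, Finset.mem_univ, true_and]
  rintro _ ⟨j, hj, rfl⟩
  exact hdisj _ j hi (by rintro rfl; simp only [Fin.val_castLE] at hj; omega)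

/-- Let `(Q,m)` be a noetherian local ring, `x₁,…,x_d ∈ m` a regular sequence on `Q`, and
`f₁,…,f_n` monomials on `x` (with exponent vectors `a_j ≠ 0`). If for every `i < c` and every
`j ≠ i` the supports of `f_i` and `f_j` are disjoint, then `f₁,…,f_c` is a regular sequence on
`Q/(f_{c+1},…,f_n)`. -/
theorem monomials_regular_sequence_of_disjoint_supports
    {Q : Type*} [CommRing Q] [IsNoetherianRing Q] [IsLocalRing Q]
    {d n : ℕ} (x : Fin d → Q) (hxm : ∀ l, x l ∈ maximalIdeal Q)
    (hx : IsRegular Q (List.ofFn x))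
    (a : Fin n → Fin d → ℕ) (ha : ∀ j, a j ≠ 0)
    (f : Fin n → Q) (hf : ∀ j, f j = ∏ l, x l ^ a j l)
    (c : ℕ) (hc1 : 1 ≤ c) (hcn : c ≤ n)
    (hdisj : ∀ i j : Fin n, (i : ℕ) < c → j ≠ i → ∀ l, a i l = 0 ∨ a j l = 0) :
    IsRegular (Q ⧸ Ideal.span (f '' {j : Fin n | c ≤ (j : ℕ)}))
      (List.ofFn fun i : Fin c => f (Fin.castLE hcn i)) :=
  monomials_regular_sequence_of_disjoint_supports_general x hxm hx a ha f hf c hcn hdisj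
end

section
/- Let (Q,m) be a regular local ring, let x₁,…,x_d ∈ m be a regular sequence on Q, and let f₁,…,f_n be monomials on x (each f_j = ∏_l x_l^{(a_j)_l} with a_j ∈ ℕ^d, a_j ≠ 0) generating the ideal I = (f₁,…,f_n). If j₁ < ⋯ < j_i are indices in {1,…,n} with i > height(I), then there exist s < t in {1,…,i} such that the supports of f_{j_s} and f_{j_t} intersect; equivalently, any subfamily of f₁,…,f_n with pairwise disjoint supports has at most height(I) members. -/
/-!
If a prime `p` contains the ideal `I`, then every monomial `f_j` lies in `p`, so some variable
`x_l` of its support does. For a family with pairwise disjoint supports these variables are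
distinct, hence `p` contains as many of the `x_l` as the family has members. In a Noetherian local
ring any subfamily of a regular sequence is again regular, and a prime containing a regular
sequence of length `k` has height at least `k`: the primes minimal over its initial segments form
a strictly increasing chain, because the next term is a nonzerodivisor modulo the previous ones.
-/

open RingTheory.Sequence IsLocalRing

/-- `Q` is a regular local ring: its maximal ideal is generated by `dim Q` many elements. -/
def IsRegularLocal (Q : Type*) [CommRing Q] [IsNoetherianRing Q] [IsLocalRing Q] : Prop :=
  ∃ s : Finset Q, Ideal.span (s : Set Q) = maximalIdeal Q ∧
    (s.card : WithBot (WithTop ℕ)) = ringKrullDim Q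

/-- The height of an ideal: the infimum of the heights of the prime ideals containing it. -/
noncomputable def idealHeight {Q : Type*} [CommRing Q] (I : Ideal Q) : ℕ∞ :=
  ⨅ (p : PrimeSpectrum Q) (_ : I ≤ p.asIdeal), Order.height p

lemma IsSMulRegular.notMem_of_mem_minimalPrimes_quotient {R : Type*} [CommRing R]
    {J q : Ideal R} {y : R} (hy : IsSMulRegular (R ⧸ J) y) (hq : q ∈ J.minimalPrimes) :
    y ∉ q :=
  hy.notMem_of_mem_minimalPrimes (by rwa [Ideal.annihilator_quotient])

namespace RingTheory.Sequence.IsWeaklyRegular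

variable {R : Type*} [CommRing R]

lemma length_le_height_of_mem_minimalPrimes {L : List R} (hL : IsWeaklyRegular R L)
    {q : PrimeSpectrum R} (hq : q.asIdeal ∈ (Ideal.ofList L).minimalPrimes) :
    (L.length : ℕ∞) ≤ Order.height q := by
  induction L using List.reverseRecOn generalizing q with
  | nil => simp
  | append_singleton L y ih =>
    rw [isWeaklyRegular_append_iff, isWeaklyRegular_singleton_iff, smul_eq_mul,
      Ideal.mul_top] at hL
    have hLq : Ideal.ofList L ≤ q.asIdeal :=
      le_trans (Ideal.span_mono fun z hz => List.mem_append_left _ hz) hq.1.2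
    obtain ⟨q', hq', hq'q⟩ := Ideal.exists_minimalPrimes_le hLq
    have hyq : y ∈ q.asIdeal := hq.1.2 (Ideal.subset_span (by simp))
    have hlt : (⟨q', hq'.1.1⟩ : PrimeSpectrum R) < q :=
      lt_of_le_of_ne hq'q fun h =>
        hL.2.notMem_of_mem_minimalPrimes_quotient hq' (by rwa [← h] at hyq)
    calc ((L ++ [y]).length : ℕ∞) = L.length + 1 := by simp
      _ ≤ Order.height (⟨q', hq'.1.1⟩ : PrimeSpectrum R) + 1 := by gcongr; exact ih hL.1 hq'
      _ ≤ Order.height q := Order.height_add_one_le hlt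

lemma length_le_height {L : List R} (hL : IsWeaklyRegular R L) {p : PrimeSpectrum R}
    (hLp : ∀ y ∈ L, y ∈ p.asIdeal) : (L.length : ℕ∞) ≤ Order.height p := by
  obtain ⟨q, hq, hqp⟩ := Ideal.exists_minimalPrimes_le (Ideal.span_le.mpr hLp)
  exact (length_le_height_of_mem_minimalPrimes hL (q := ⟨q, hq.1.1⟩) hq).trans
    (Order.height_mono hqp)

end RingTheory.Sequence.IsWeaklyRegular

lemma IsLocalRing.isWeaklyRegular_of_subperm {R M : Type*} [CommRing R] [AddCommGroup M]
    [Module R M] [IsLocalRing R] [IsNoetherian R M] {rs rs' : List R} (h : IsRegular M rs)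
    (h' : rs'.Subperm rs) : IsWeaklyRegular M rs' := by
  obtain ⟨l, hl, hsub⟩ := h'
  obtain ⟨r, hr⟩ := hsub.exists_perm_append
  have := (isRegular_of_perm h (hr.trans (hl.append_right r))).toIsWeaklyRegular
  exact ((isWeaklyRegular_append_iff _ _ _).mp this).1

lemma IsLocalRing.card_le_height_of_isRegular_ofFn {R : Type*} [CommRing R] [IsLocalRing R]
    [IsNoetherianRing R] {d : ℕ} {x : Fin d → R} (hx : IsRegular R (List.ofFn x))
    (T : Finset (Fin d)) {p : PrimeSpectrum R} (hTp : ∀ l ∈ T, x l ∈ p.asIdeal) :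
    (T.card : ℕ∞) ≤ Order.height p := by
  have hreg : IsWeaklyRegular R (T.toList.map x) := by
    refine isWeaklyRegular_of_subperm hx ?_
    rw [List.ofFn_eq_map]
    obtain ⟨l, hl, hsub⟩ := T.nodup_toList.subperm fun l _ => List.mem_finRange l
    exact ⟨l.map x, hl.map x, hsub.map x⟩
  simpa using hreg.length_le_height (p := p) (by simpa using hTp)

lemma Ideal.IsPrime.exists_ne_zero_and_mem_of_prod_pow_mem {R ι : Type*} [CommRing R]
    [Fintype ι] {p : Ideal R} (hp : p.IsPrime) {x : ι → R} {a : ι → ℕ}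
    (h : ∏ l, x l ^ a l ∈ p) : ∃ l, a l ≠ 0 ∧ x l ∈ p := by
  obtain ⟨l, -, hl⟩ := hp.prod_mem_iff.mp h
  have hal : a l ≠ 0 := by
    rintro hal
    rw [hal, pow_zero] at hl
    exact hp.ne_top (p.eq_top_of_isUnit_mem hl isUnit_one)
  exact ⟨l, hal, hp.mem_of_pow_mem _ hl⟩

lemma card_le_idealHeight_of_pairwise_disjoint_support {R : Type*} [CommRing R]
    [IsLocalRing R] [IsNoetherianRing R] {d n : ℕ} {x : Fin d → R}
    (hx : IsRegular R (List.ofFn x)) {a : Fin n → Fin d → ℕ} {I : Ideal R} {s : Finset (Fin n)}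
    (hsI : ∀ j ∈ s, ∏ l, x l ^ a j l ∈ I)
    (hdisj : ∀ i ∈ s, ∀ j ∈ s, i ≠ j → ∀ l, a i l = 0 ∨ a j l = 0) :
    (s.card : ℕ∞) ≤ idealHeight I := by
  classical
  refine le_iInf₂ fun p hIp => le_trans ?_ (card_le_height_of_isRegular_ofFn hx
    (Finset.univ.filter fun l => x l ∈ p.asIdeal) (by simp))
  refine Nat.cast_le.mpr (Finset.card_le_card_of_forall_subsingleton (fun j l => a j l ≠ 0)
    (fun j hj => ?_) fun l _ i ⟨hi, hil⟩ j ⟨hj, hjl⟩ => ?_)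
  · obtain ⟨l, hl0, hlp⟩ := p.2.exists_ne_zero_and_mem_of_prod_pow_mem (hIp (hsI j hj))
    exact ⟨l, by simpa using hlp, hl0⟩
  · by_contra hij
    exact (hdisj i hi j hj hij l).elim hil hjl

theorem monomials_with_disjoint_supports_le_height_general
    {Q : Type*} [CommRing Q] [IsNoetherianRing Q] [IsLocalRing Q]
    {d n : ℕ} (x : Fin d → Q)
    (hx : IsRegular Q (List.ofFn x))
    (a : Fin n → Fin d → ℕ)
    (f : Fin n → Q) (hf : ∀ j, f j = ∏ l, x l ^ a j l)
    (I : Ideal Q) (hI : I = Ideal.span (Set.range f)) :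
    (∀ (i : ℕ) (j : Fin i → Fin n), StrictMono j → idealHeight I < (i : ℕ∞) →
      ∃ s t : Fin i, s < t ∧ ∃ l, a (j s) l ≠ 0 ∧ a (j t) l ≠ 0) ∧
    (∀ s : Finset (Fin n),
      (∀ i ∈ s, ∀ j ∈ s, i ≠ j → ∀ l, a i l = 0 ∨ a j l = 0) →
      (s.card : ℕ∞) ≤ idealHeight I) := by
  have hmemI : ∀ j, ∏ l, x l ^ a j l ∈ I := fun j => hI ▸ hf j ▸ Ideal.subset_span ⟨j, rfl⟩
  have hbound : ∀ s : Finset (Fin n), (∀ i ∈ s, ∀ j ∈ s, i ≠ j → ∀ l, a i l = 0 ∨ a j l = 0) →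
      (s.card : ℕ∞) ≤ idealHeight I :=
    fun _ => card_le_idealHeight_of_pairwise_disjoint_support hx fun j _ => hmemI j
  refine ⟨fun i j hj hlt => ?_, hbound⟩
  by_contra! hcon
  have hdisj : ∀ u v : Fin i, u < v → ∀ l, a (j u) l = 0 ∨ a (j v) l = 0 := fun u v huv l =>
    or_iff_not_imp_left.mpr (hcon u v huv l)
  refine (hbound (Finset.univ.map ⟨j, hj.injective⟩) ?_).not_gt (by simpa using hlt)
  simp only [Finset.mem_map, Finset.mem_univ, true_and, Function.Embedding.coeFn_mk]
  rintro _ ⟨u, rfl⟩ _ ⟨v, rfl⟩ huv l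
  rcases lt_or_gt_of_ne (ne_of_apply_ne j huv) with h | h
  · exact hdisj u v h l
  · exact (hdisj v u h l).symm

/-- Let `(Q,m)` be a regular local ring and `f₁,…,f_n` monomials on a regular sequence
`x₁,…,x_d ∈ m`, generating `I = (f₁,…,f_n)`. Given indices `j₁ < ⋯ < j_i` with
`i > height I`, two of the corresponding monomials have intersecting supports; equivalently,
any subfamily of `f₁,…,f_n` with pairwise disjoint supports has at most `height I` members. -/
theorem monomials_with_disjoint_supports_le_height
    {Q : Type*} [CommRing Q] [IsNoetherianRing Q] [IsLocalRing Q]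
    (hQ : IsRegularLocal Q)
    {d n : ℕ} (x : Fin d → Q) (hxm : ∀ l, x l ∈ maximalIdeal Q)
    (hx : IsRegular Q (List.ofFn x))
    (a : Fin n → Fin d → ℕ) (ha : ∀ j, a j ≠ 0)
    (f : Fin n → Q) (hf : ∀ j, f j = ∏ l, x l ^ a j l)
    (I : Ideal Q) (hI : I = Ideal.span (Set.range f)) :
    (∀ (i : ℕ) (j : Fin i → Fin n), StrictMono j → idealHeight I < (i : ℕ∞) →
      ∃ s t : Fin i, s < t ∧ ∃ l, a (j s) l ≠ 0 ∧ a (j t) l ≠ 0) ∧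
    (∀ s : Finset (Fin n),
      (∀ i ∈ s, ∀ j ∈ s, i ≠ j → ∀ l, a i l = 0 ∨ a j l = 0) →
      (s.card : ℕ∞) ≤ idealHeight I) :=
  monomials_with_disjoint_supports_le_height_general x hx a f hf I hI
end

section
/- Let Q be a commutative ring, x₁,…,x_d ∈ Q, and a₁,…,a_n ∈ ℕ^d. For J ⊆ {1,…,n} let a_J ∈ ℕ^d be the coordinatewise maximum of {a_j : j ∈ J} (with a_∅ = 0). Let T be the free Q-module with basis {b_J : J ⊆ {1,…,n}}, equipped with the Q-bilinear product determined by b_J · b_K = sgn(J,K) · (∏_{l=1}^d x_l^{(a_J)_l + (a_K)_l − (a_{J∪K})_l}) · b_{J∪K} when J ∩ K = ∅, and b_J · b_K = 0 when J ∩ K ≠ ∅. Then this product is associative: (b_J · b_K) · b_L = b_J · (b_K · b_L) for all J, K, L ⊆ {1,…,n}, and b_∅ is a two-sided identity. -/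
/-!
The product is a twisted monoid algebra of `(Finset (Fin n), ∪)`: writing
`b_J · b_K = c(J,K) b_{J∪K}`, associativity on basis elements is exactly the cocycle identity
`c(J,K) c(J∪K,L) = c(K,L) c(J,K∪L)`, and `b_∅` is a unit because `c(∅,J) = c(J,∅) = 1`.
The coefficient `c` splits into a sign and a monomial. Both sides of the sign identity vanish
unless `J, K, L` are pairwise disjoint, and then both count the inversions between the three
pairs. The exponent identity is `(p + q - p ⊔ q) + (p ⊔ q + r - p ⊔ q ⊔ r)
= (q + r - q ⊔ r) + (p + q ⊔ r - p ⊔ q ⊔ r)`, since `a_{J∪K} = a_J ⊔ a_K`.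
-/

/-- `sgn J L = (−1)^{|{(j,ℓ) ∈ J×L : j > ℓ}|}` if `J` and `L` are disjoint, and `0` otherwise. -/
def taylorSgn {n : ℕ} (J L : Finset (Fin n)) : ℤ :=
  if Disjoint J L then (-1) ^ (((J ×ˢ L).filter fun p => p.2 < p.1).card) else 0

/-- `a_J`, the coordinatewise maximum of `{a_j : j ∈ J}` (with `a_∅ = 0`). -/
def maxExp {n d : ℕ} (a : Fin n → Fin d → ℕ) (J : Finset (Fin n)) : Fin d → ℕ :=
  fun l => J.sup fun j => a j l

section TwistedProduct

open Finsupp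

variable {ι R : Type*} [CommSemiring R] (op : ι → ι → ι) (c : ι → ι → R)
  {mul : (ι →₀ R) →ₗ[R] (ι →₀ R) →ₗ[R] (ι →₀ R)}

theorem bilin_single_assoc_of_cocycle
    (hmul : ∀ i j, mul (single i 1) (single j 1) = single (op i j) (c i j))
    (hop : ∀ i j k, op (op i j) k = op i (op j k))
    (hc : ∀ i j k, c i j * c (op i j) k = c j k * c i (op j k)) (i j k : ι) :
    mul (mul (single i 1) (single j 1)) (single k 1) =
      mul (single i 1) (mul (single j 1) (single k 1)) := by
  rw [hmul, hmul, ← Finsupp.smul_single_one (op i j), ← Finsupp.smul_single_one (op j k),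
    map_smul, map_smul, LinearMap.smul_apply, hmul, hmul, Finsupp.smul_single,
    Finsupp.smul_single, smul_eq_mul, smul_eq_mul, hop, hc]

theorem bilin_single_left_eq_self {e : ι}
    (hmul : ∀ i j, mul (single i 1) (single j 1) = single (op i j) (c i j))
    (hop : ∀ j, op e j = j) (hc : ∀ j, c e j = 1) (t : ι →₀ R) :
    mul (single e 1) t = t := by
  suffices mul (single e 1) = LinearMap.id from LinearMap.congr_fun this t
  ext j
  simp [hmul, hop, hc]

theorem bilin_single_right_eq_self {e : ι}
    (hmul : ∀ i j, mul (single i 1) (single j 1) = single (op i j) (c i j))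
    (hop : ∀ i, op i e = i) (hc : ∀ i, c i e = 1) (t : ι →₀ R) :
    mul t (single e 1) = t := by
  suffices mul.flip (single e 1) = LinearMap.id from LinearMap.congr_fun this t
  ext i
  simp [hmul, hop, hc]

end TwistedProduct

section ProductFilter

variable {α β : Type*} [DecidableEq α] [DecidableEq β] (p : α × β → Prop) [DecidablePred p]

theorem Finset.card_filter_union_product {s t : Finset α} (h : Disjoint s t) (u : Finset β) :
    (((s ∪ t) ×ˢ u).filter p).card =
      ((s ×ˢ u).filter p).card + ((t ×ˢ u).filter p).card := by
  rw [Finset.union_product, Finset.filter_union, Finset.card_union_of_disjoint]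
  exact Finset.disjoint_filter_filter (Finset.disjoint_product.mpr (Or.inl h))

theorem Finset.card_filter_product_union (s : Finset α) {t u : Finset β} (h : Disjoint t u) :
    ((s ×ˢ (t ∪ u)).filter p).card =
      ((s ×ˢ t).filter p).card + ((s ×ˢ u).filter p).card := by
  rw [Finset.product_union, Finset.filter_union, Finset.card_union_of_disjoint]
  exact Finset.disjoint_filter_filter (Finset.disjoint_product.mpr (Or.inr h))

end ProductFilter

section Sign

variable {n : ℕ}

def inversionCount (J L : Finset (Fin n)) : ℕ :=
  ((J ×ˢ L).filter fun p => p.2 < p.1).card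

theorem taylorSgn_eq (J L : Finset (Fin n)) :
    taylorSgn J L = if Disjoint J L then (-1) ^ inversionCount J L else 0 :=
  rfl

theorem inversionCount_union_left {J K : Finset (Fin n)} (h : Disjoint J K)
    (L : Finset (Fin n)) :
    inversionCount (J ∪ K) L = inversionCount J L + inversionCount K L :=
  Finset.card_filter_union_product _ h L

theorem inversionCount_union_right (J : Finset (Fin n)) {K L : Finset (Fin n)}
    (h : Disjoint K L) :
    inversionCount J (K ∪ L) = inversionCount J K + inversionCount J L :=
  Finset.card_filter_product_union _ J h

theorem taylorSgn_mul_taylorSgn_union_left (J K L : Finset (Fin n)) :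
    taylorSgn J K * taylorSgn (J ∪ K) L =
      if Disjoint J K ∧ Disjoint J L ∧ Disjoint K L then
        (-1) ^ (inversionCount J K + inversionCount J L + inversionCount K L)
      else 0 := by
  by_cases hJK : Disjoint J K
  · rw [taylorSgn_eq, taylorSgn_eq, inversionCount_union_left hJK]
    split_ifs <;> simp_all [Finset.disjoint_union_left, pow_add, mul_assoc]
  · simp [taylorSgn_eq, hJK]

theorem taylorSgn_mul_taylorSgn_union_right (J K L : Finset (Fin n)) :
    taylorSgn K L * taylorSgn J (K ∪ L) =
      if Disjoint J K ∧ Disjoint J L ∧ Disjoint K L then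
        (-1) ^ (inversionCount J K + inversionCount J L + inversionCount K L)
      else 0 := by
  by_cases hKL : Disjoint K L
  · rw [taylorSgn_eq, taylorSgn_eq, inversionCount_union_right J hKL]
    split_ifs <;> simp_all [Finset.disjoint_union_right, pow_add, mul_comm]
  · simp [taylorSgn_eq, hKL]

theorem taylorSgn_cocycle (J K L : Finset (Fin n)) :
    taylorSgn J K * taylorSgn (J ∪ K) L = taylorSgn K L * taylorSgn J (K ∪ L) := by
  rw [taylorSgn_mul_taylorSgn_union_left, taylorSgn_mul_taylorSgn_union_right]

theorem taylorSgn_empty_left (J : Finset (Fin n)) : taylorSgn ∅ J = 1 := by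
  simp [taylorSgn]

theorem taylorSgn_empty_right (J : Finset (Fin n)) : taylorSgn J ∅ = 1 := by
  simp [taylorSgn]

end Sign

section Exponent

variable {n d : ℕ} (a : Fin n → Fin d → ℕ)

/-- The exponent of `x_l` in `b_J · b_K`. -/
def maxExpDefect (J K : Finset (Fin n)) (l : Fin d) : ℕ :=
  maxExp a J l + maxExp a K l - maxExp a (J ∪ K) l

theorem maxExpDefect_cocycle (J K L : Finset (Fin n)) (l : Fin d) :
    maxExpDefect a J K l + maxExpDefect a (J ∪ K) L l =
      maxExpDefect a K L l + maxExpDefect a J (K ∪ L) l := by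
  simp only [maxExpDefect, maxExp, Finset.sup_union, Finset.union_assoc]
  omega

theorem maxExpDefect_empty_left (J : Finset (Fin n)) : maxExpDefect a ∅ J = 0 := by
  ext l
  simp [maxExpDefect, maxExp]

theorem maxExpDefect_empty_right (J : Finset (Fin n)) : maxExpDefect a J ∅ = 0 := by
  ext l
  simp [maxExpDefect, maxExp]

end Exponent

section Coeff

variable {Q : Type*} [CommRing Q] {n d : ℕ} (x : Fin d → Q) (a : Fin n → Fin d → ℕ)

def taylorCoeff (J K : Finset (Fin n)) : Q :=
  (taylorSgn J K : Q) * ∏ l, x l ^ maxExpDefect a J K l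

theorem taylorCoeff_cocycle (J K L : Finset (Fin n)) :
    taylorCoeff x a J K * taylorCoeff x a (J ∪ K) L =
      taylorCoeff x a K L * taylorCoeff x a J (K ∪ L) := by
  have hmonomial : (∏ l, x l ^ maxExpDefect a J K l) * ∏ l, x l ^ maxExpDefect a (J ∪ K) L l =
      (∏ l, x l ^ maxExpDefect a K L l) * ∏ l, x l ^ maxExpDefect a J (K ∪ L) l := by
    simp only [← Finset.prod_mul_distrib, ← pow_add, maxExpDefect_cocycle]
  simp only [taylorCoeff]
  rw [mul_mul_mul_comm, ← Int.cast_mul, taylorSgn_cocycle, hmonomial, Int.cast_mul,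
    mul_mul_mul_comm]

theorem taylorCoeff_empty_left (J : Finset (Fin n)) : taylorCoeff x a ∅ J = 1 := by
  simp [taylorCoeff, taylorSgn_empty_left, maxExpDefect_empty_left]

theorem taylorCoeff_empty_right (J : Finset (Fin n)) : taylorCoeff x a J ∅ = 1 := by
  simp [taylorCoeff, taylorSgn_empty_right, maxExpDefect_empty_right]

/-- The case split in the defining product is redundant: `taylorSgn` already vanishes on
overlapping index sets. -/
theorem ite_disjoint_single_taylorCoeff (J K : Finset (Fin n)) :
    (if Disjoint J K then
        Finsupp.single (J ∪ K)
          ((taylorSgn J K : Q) * ∏ l, x l ^ (maxExp a J l + maxExp a K l - maxExp a (J ∪ K) l))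
      else 0) = Finsupp.single (J ∪ K) (taylorCoeff x a J K) := by
  split_ifs with h
  · rfl
  · simp [taylorCoeff, taylorSgn, h]

end Coeff

/-- Let `T` be the free `Q`-module on basis `{b_J : J ⊆ [n]}`, equipped with the `Q`-bilinear
product determined by
`b_J · b_K = sgn(J,K) · (∏_l x_l^{(a_J)_l + (a_K)_l − (a_{J∪K})_l}) · b_{J∪K}` when
`J ∩ K = ∅`, and `b_J · b_K = 0` otherwise. Then the product is associative and `b_∅` is a
two-sided identity. -/
theorem taylor_product_assoc_and_one {Q : Type*} [CommRing Q] {n d : ℕ}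
    (x : Fin d → Q) (a : Fin n → Fin d → ℕ)
    (mul : (Finset (Fin n) →₀ Q) →ₗ[Q] (Finset (Fin n) →₀ Q) →ₗ[Q] (Finset (Fin n) →₀ Q))
    (hmul : ∀ J K : Finset (Fin n), mul (Finsupp.single J 1) (Finsupp.single K 1) =
      if Disjoint J K then
        Finsupp.single (J ∪ K)
          ((taylorSgn J K : Q) * ∏ l, x l ^ (maxExp a J l + maxExp a K l - maxExp a (J ∪ K) l))
      else 0) :
    (∀ J K L : Finset (Fin n),
        mul (mul (Finsupp.single J 1) (Finsupp.single K 1)) (Finsupp.single L 1) =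
          mul (Finsupp.single J 1) (mul (Finsupp.single K 1) (Finsupp.single L 1))) ∧
    (∀ t : Finset (Fin n) →₀ Q,
        mul (Finsupp.single (∅ : Finset (Fin n)) 1) t = t ∧
        mul t (Finsupp.single (∅ : Finset (Fin n)) 1) = t) := by
  have hmul' : ∀ J K : Finset (Fin n), mul (Finsupp.single J 1) (Finsupp.single K 1) =
      Finsupp.single (J ∪ K) (taylorCoeff x a J K) :=
    fun J K => (hmul J K).trans (ite_disjoint_single_taylorCoeff x a J K)
  refine ⟨bilin_single_assoc_of_cocycle _ _ hmul' Finset.union_assoc (taylorCoeff_cocycle x a),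
    fun t => ⟨?_, ?_⟩⟩
  · exact bilin_single_left_eq_self _ _ hmul' Finset.empty_union (taylorCoeff_empty_left x a) t
  · exact bilin_single_right_eq_self _ _ hmul' Finset.union_empty (taylorCoeff_empty_right x a) t
end

section
/- Let Q be a commutative ring, x₁,…,x_d ∈ Q, and a₁,…,a_n ∈ ℕ^d. For J ⊆ {1,…,n} let a_J ∈ ℕ^d be the coordinatewise maximum of {a_j : j ∈ J} (with a_∅ = 0), and for J' ⊆ J set f_{J/J'} := ∏_{l=1}^d x_l^{(a_J)_l − (a_{J'})_l}. Let T be the free Q-module with basis {b_J : J ⊆ {1,…,n}}, with Q-linear differential ∂(b_J) = Σ_{i∈J} sgn({i}, J∖{i}) · f_{J/(J∖{i})} · b_{J∖{i}} and Q-bilinear product b_J · b_K = sgn(J,K) · (∏_l x_l^{(a_J)_l + (a_K)_l − (a_{J∪K})_l}) · b_{J∪K} for J ∩ K = ∅ and b_J · b_K = 0 otherwise. Then the Leibniz rule holds: ∂(b_J · b_K) = ∂(b_J) · b_K + (−1)^{|J|} b_J · ∂(b_K) for all J, K ⊆ {1,…,n}. -/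
/-- `f_{J/J'} = ∏_l x_l ^ ((a_J)_l − (a_{J'})_l)`. -/
def quotMonomial {Q : Type*} [CommRing Q] {n d : ℕ} (x : Fin d → Q)
    (a : Fin n → Fin d → ℕ) (J J' : Finset (Fin n)) : Q :=
  ∏ l, x l ^ (maxExp a J l - maxExp a J' l)

/-!
Write `∂ b_J = ∑_{i ∈ J} ∂_{J,i} b_{J∖i}` and `b_J b_K = μ_{J,K} b_{J∪K}` (`taylorDiffCoeff`,
`taylorMulCoeff`), where `μ_{J,K} = 0` whenever `J ∩ K ≠ ∅` because the sign vanishes. Comparing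
the two sides term by term over `i ∈ J ∪ K` leaves three scalar identities: for `i ∈ J∖K` and
`i ∈ K∖J` the term of `∂(b_J b_K)` matches one term on the right, and for `i ∈ J ∩ K` the two
terms on the right, both multiples of `b_{J∪K}`, cancel. Each identity factors into one between
signs, obtained by splitting off `{i}` with the multiplicativity of `sgn` in each argument, and
one between monomials, which is an identity between exponents built from `max`.
-/
open Finset

section Sign

variable {n : ℕ}

lemma taylorSgn_of_not_disjoint {J L : Finset (Fin n)} (h : ¬Disjoint J L) : taylorSgn J L = 0 :=
  if_neg h

lemma taylorSgn_union_left {A B C : Finset (Fin n)} (hAB : Disjoint A B) :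
    taylorSgn (A ∪ B) C = taylorSgn A C * taylorSgn B C := by
  by_cases h : Disjoint (A ∪ B) C
  · obtain ⟨hAC, hBC⟩ := disjoint_union_left.mp h
    rw [taylorSgn, taylorSgn, taylorSgn, if_pos h, if_pos hAC, if_pos hBC, ← pow_add,
      union_product, filter_union,
      card_union_of_disjoint (disjoint_filter_filter (disjoint_product.mpr (Or.inl hAB)))]
  · rw [taylorSgn_of_not_disjoint h]
    rcases not_and_or.mp (disjoint_union_left.not.mp h) with h | h <;>
      simp [taylorSgn_of_not_disjoint h]

lemma taylorSgn_union_right {A B C : Finset (Fin n)} (hBC : Disjoint B C) :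
    taylorSgn A (B ∪ C) = taylorSgn A B * taylorSgn A C := by
  by_cases h : Disjoint A (B ∪ C)
  · obtain ⟨hAB, hAC⟩ := disjoint_union_right.mp h
    rw [taylorSgn, taylorSgn, taylorSgn, if_pos h, if_pos hAB, if_pos hAC, ← pow_add,
      product_union, filter_union,
      card_union_of_disjoint (disjoint_filter_filter (disjoint_product.mpr (Or.inr hBC)))]
  · rw [taylorSgn_of_not_disjoint h]
    rcases not_and_or.mp (disjoint_union_right.not.mp h) with h | h <;>
      simp [taylorSgn_of_not_disjoint h]

lemma taylorSgn_mul_self {A B : Finset (Fin n)} (h : Disjoint A B) :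
    taylorSgn A B * taylorSgn A B = 1 := by
  rw [taylorSgn, if_pos h, ← pow_add]
  exact Even.neg_one_pow ⟨_, rfl⟩

lemma taylorSgn_mul_taylorSgn_comm {A B : Finset (Fin n)} (h : Disjoint A B) :
    taylorSgn A B * taylorSgn B A = (-1) ^ (#A * #B) := by
  have hswap : #{p ∈ B ×ˢ A | p.2 < p.1} = #{p ∈ A ×ˢ B | ¬p.2 < p.1} := by
    rw [← map_swap_product, filter_map, card_map]
    congr 1
    refine filter_congr fun p hp => ?_
    have hne : p.1 ≠ p.2 := fun hp' => disjoint_left.mp h (mem_product.mp hp).1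
      (hp' ▸ (mem_product.mp hp).2)
    simp only [Function.comp_apply, Function.Embedding.coeFn_mk, Prod.fst_swap, Prod.snd_swap]
    exact ⟨fun h' => h'.not_gt, fun h' => (lt_or_gt_of_ne hne).resolve_right h'⟩
  rw [taylorSgn, taylorSgn, if_pos h, if_pos h.symm, ← pow_add, hswap,
    card_filter_add_card_filter_not, card_product]

lemma taylorSgn_eq_of_mem_left {J K : Finset (Fin n)} {i : Fin n} (hi : i ∈ J) :
    taylorSgn J K = taylorSgn {i} K * taylorSgn (J.erase i) K := by
  conv_lhs => rw [← insert_erase hi, insert_eq]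
  exact taylorSgn_union_left (disjoint_singleton_left.mpr (notMem_erase i J))

lemma taylorSgn_eq_of_mem_right {J K : Finset (Fin n)} {k : Fin n} (hk : k ∈ K) :
    taylorSgn J K = taylorSgn J (K.erase k) * taylorSgn J {k} := by
  conv_lhs => rw [← insert_erase hk, insert_eq, union_comm]
  exact taylorSgn_union_right (disjoint_singleton_right.mpr (notMem_erase k K))

lemma taylorSgn_leibniz_left {J K : Finset (Fin n)} {i : Fin n} (hiJ : i ∈ J) (hiK : i ∉ K) :
    taylorSgn J K * taylorSgn {i} ((J ∪ K).erase i) =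
      taylorSgn {i} (J.erase i) * taylorSgn (J.erase i) K := by
  rw [taylorSgn_eq_of_mem_left hiJ, erase_union_distrib, erase_eq_of_notMem hiK]
  by_cases hd : Disjoint (J.erase i) K
  · have hsq := taylorSgn_mul_self (disjoint_singleton_left.mpr hiK)
    rw [taylorSgn_union_right hd]
    linear_combination (taylorSgn {i} (J.erase i) * taylorSgn (J.erase i) K) * hsq
  · simp [taylorSgn_of_not_disjoint hd]

lemma taylorSgn_leibniz_right {J K : Finset (Fin n)} {k : Fin n} (hkK : k ∈ K) (hkJ : k ∉ J) :
    taylorSgn J K * taylorSgn {k} ((J ∪ K).erase k) =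
      (-1) ^ #J * (taylorSgn {k} (K.erase k) * taylorSgn J (K.erase k)) := by
  rw [taylorSgn_eq_of_mem_right hkK, erase_union_distrib, erase_eq_of_notMem hkJ]
  by_cases hd : Disjoint J (K.erase k)
  · have hswap := taylorSgn_mul_taylorSgn_comm (disjoint_singleton_right.mpr hkJ)
    rw [card_singleton, mul_one] at hswap
    rw [taylorSgn_union_right hd]
    linear_combination (taylorSgn {k} (K.erase k) * taylorSgn J (K.erase k)) * hswap
  · simp [taylorSgn_of_not_disjoint hd]

lemma taylorSgn_leibniz_inter {J K : Finset (Fin n)} {i : Fin n} (hiJ : i ∈ J) (hiK : i ∈ K) :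
    taylorSgn {i} (J.erase i) * taylorSgn (J.erase i) K +
      (-1) ^ #J * (taylorSgn {i} (K.erase i) * taylorSgn J (K.erase i)) = 0 := by
  have hswap := taylorSgn_mul_taylorSgn_comm (disjoint_singleton_right.mpr (notMem_erase i J))
  rw [card_singleton, mul_one] at hswap
  have hsq := taylorSgn_mul_self (disjoint_singleton_left.mpr (notMem_erase i K))
  rw [taylorSgn_eq_of_mem_right hiK, taylorSgn_eq_of_mem_left (K := K.erase i) hiJ,
    ← card_erase_add_one hiJ, pow_succ]
  linear_combination taylorSgn (J.erase i) (K.erase i) * hswap -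
    (-1) ^ #(J.erase i) * taylorSgn (J.erase i) (K.erase i) * hsq

end Sign

section Monomial

variable {Q : Type*} [CommRing Q] {n d : ℕ} (x : Fin d → Q) (a : Fin n → Fin d → ℕ)

lemma prod_pow_mul_prod_pow_eq {ι M : Type*} [Fintype ι] [CommMonoid M] (y : ι → M)
    {e f g h : ι → ℕ} (hexp : ∀ l, e l + f l = g l + h l) :
    (∏ l, y l ^ e l) * ∏ l, y l ^ f l = (∏ l, y l ^ g l) * ∏ l, y l ^ h l := by
  simp only [← prod_mul_distrib, ← pow_add, hexp]

lemma maxExp_union (J K : Finset (Fin n)) (l : Fin d) :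
    maxExp a (J ∪ K) l = max (maxExp a J l) (maxExp a K l) :=
  sup_union

lemma maxExp_eq_of_mem {J : Finset (Fin n)} {i : Fin n} (hi : i ∈ J) (l : Fin d) :
    maxExp a J l = max (a i l) (maxExp a (J.erase i) l) := by
  conv_lhs => rw [← insert_erase hi]
  exact sup_insert

def taylorMulMonomial (J K : Finset (Fin n)) : Q :=
  ∏ l, x l ^ (maxExp a J l + maxExp a K l - maxExp a (J ∪ K) l)

lemma taylorMulMonomial_comm (J K : Finset (Fin n)) :
    taylorMulMonomial x a J K = taylorMulMonomial x a K J := by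
  simp only [taylorMulMonomial, union_comm J K, add_comm (maxExp a J _)]

lemma taylorMulMonomial_leibniz_left {J K : Finset (Fin n)} {i : Fin n} (hiJ : i ∈ J)
    (hiK : i ∉ K) :
    taylorMulMonomial x a J K * quotMonomial x a (J ∪ K) ((J ∪ K).erase i) =
      quotMonomial x a J (J.erase i) * taylorMulMonomial x a (J.erase i) K := by
  rw [erase_union_distrib, erase_eq_of_notMem hiK]
  refine prod_pow_mul_prod_pow_eq x fun l => ?_
  have := maxExp_eq_of_mem a hiJ l
  have := maxExp_union a J K l
  have := maxExp_union a (J.erase i) K l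
  omega

lemma taylorMulMonomial_leibniz_right {J K : Finset (Fin n)} {k : Fin n} (hkK : k ∈ K)
    (hkJ : k ∉ J) :
    taylorMulMonomial x a J K * quotMonomial x a (J ∪ K) ((J ∪ K).erase k) =
      quotMonomial x a K (K.erase k) * taylorMulMonomial x a J (K.erase k) := by
  rw [taylorMulMonomial_comm, union_comm, taylorMulMonomial_leibniz_left x a hkK hkJ,
    taylorMulMonomial_comm]

lemma taylorMulMonomial_leibniz_inter {J K : Finset (Fin n)} {i : Fin n} (hiJ : i ∈ J)
    (hiK : i ∈ K) :
    quotMonomial x a J (J.erase i) * taylorMulMonomial x a (J.erase i) K =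
      quotMonomial x a K (K.erase i) * taylorMulMonomial x a J (K.erase i) := by
  refine prod_pow_mul_prod_pow_eq x fun l => ?_
  have := maxExp_eq_of_mem a hiJ l
  have := maxExp_eq_of_mem a hiK l
  have := maxExp_union a (J.erase i) K l
  have := maxExp_union a J (K.erase i) l
  omega

end Monomial

section Coeff

variable {Q : Type*} [CommRing Q] {n d : ℕ} (x : Fin d → Q) (a : Fin n → Fin d → ℕ)

def taylorDiffCoeff (J : Finset (Fin n)) (i : Fin n) : Q :=
  taylorSgn {i} (J.erase i) * quotMonomial x a J (J.erase i)

def taylorMulCoeff (J K : Finset (Fin n)) : Q :=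
  taylorSgn J K * taylorMulMonomial x a J K

lemma taylorMulCoeff_of_not_disjoint {J K : Finset (Fin n)} (h : ¬Disjoint J K) :
    taylorMulCoeff x a J K = 0 := by
  rw [taylorMulCoeff, taylorSgn_of_not_disjoint h, Int.cast_zero, zero_mul]

lemma taylorMulCoeff_leibniz_left {J K : Finset (Fin n)} {i : Fin n} (hiJ : i ∈ J) (hiK : i ∉ K) :
    taylorMulCoeff x a J K * taylorDiffCoeff x a (J ∪ K) i =
      taylorDiffCoeff x a J i * taylorMulCoeff x a (J.erase i) K := by
  have hs := congrArg (Int.cast : ℤ → Q) (taylorSgn_leibniz_left hiJ hiK)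
  push_cast at hs
  unfold taylorMulCoeff taylorDiffCoeff
  linear_combination
    (taylorMulMonomial x a J K * quotMonomial x a (J ∪ K) ((J ∪ K).erase i)) * hs +
      ((taylorSgn {i} (J.erase i) : Q) * taylorSgn (J.erase i) K) *
        taylorMulMonomial_leibniz_left x a hiJ hiK

lemma taylorMulCoeff_leibniz_right {J K : Finset (Fin n)} {k : Fin n} (hkK : k ∈ K)
    (hkJ : k ∉ J) :
    taylorMulCoeff x a J K * taylorDiffCoeff x a (J ∪ K) k =
      (-1) ^ #J * (taylorDiffCoeff x a K k * taylorMulCoeff x a J (K.erase k)) := by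
  have hs := congrArg (Int.cast : ℤ → Q) (taylorSgn_leibniz_right hkK hkJ)
  push_cast at hs
  unfold taylorMulCoeff taylorDiffCoeff
  linear_combination
    (taylorMulMonomial x a J K * quotMonomial x a (J ∪ K) ((J ∪ K).erase k)) * hs +
      ((-1) ^ #J * (taylorSgn {k} (K.erase k) : Q) * taylorSgn J (K.erase k)) *
        taylorMulMonomial_leibniz_right x a hkK hkJ

lemma taylorMulCoeff_leibniz_inter {J K : Finset (Fin n)} {i : Fin n} (hiJ : i ∈ J)
    (hiK : i ∈ K) :
    taylorDiffCoeff x a J i * taylorMulCoeff x a (J.erase i) K +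
      (-1) ^ #J * (taylorDiffCoeff x a K i * taylorMulCoeff x a J (K.erase i)) = 0 := by
  have hs := congrArg (Int.cast : ℤ → Q) (taylorSgn_leibniz_inter hiJ hiK)
  push_cast at hs
  unfold taylorMulCoeff taylorDiffCoeff
  linear_combination
    (quotMonomial x a J (J.erase i) * taylorMulMonomial x a (J.erase i) K) * hs -
      ((-1) ^ #J * (taylorSgn {i} (K.erase i) : Q) * taylorSgn J (K.erase i)) *
        taylorMulMonomial_leibniz_inter x a hiJ hiK

lemma single_taylorMulCoeff_mul_taylorDiffCoeff {J K : Finset (Fin n)} {i : Fin n}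
    (hi : i ∈ J ∪ K) :
    Finsupp.single ((J ∪ K).erase i) (taylorMulCoeff x a J K * taylorDiffCoeff x a (J ∪ K) i) =
      (if i ∈ J then Finsupp.single (J.erase i ∪ K)
          (taylorDiffCoeff x a J i * taylorMulCoeff x a (J.erase i) K) else 0) +
        (if i ∈ K then Finsupp.single (J ∪ K.erase i)
          ((-1) ^ #J * (taylorDiffCoeff x a K i * taylorMulCoeff x a J (K.erase i))) else 0) := by
  by_cases hiJ : i ∈ J <;> by_cases hiK : i ∈ K
  · rw [if_pos hiJ, if_pos hiK, erase_union_of_mem hiK, union_erase_of_mem hiJ,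
      ← Finsupp.single_add, taylorMulCoeff_leibniz_inter x a hiJ hiK,
      taylorMulCoeff_of_not_disjoint x a (not_disjoint_iff.mpr ⟨i, hiJ, hiK⟩), zero_mul,
      Finsupp.single_zero, Finsupp.single_zero]
  · rw [if_pos hiJ, if_neg hiK, add_zero, erase_union_distrib, erase_eq_of_notMem hiK,
      taylorMulCoeff_leibniz_left x a hiJ hiK]
  · rw [if_neg hiJ, if_pos hiK, zero_add, erase_union_distrib, erase_eq_of_notMem hiJ,
      taylorMulCoeff_leibniz_right x a hiK hiJ]
  · exact absurd (mem_union.mp hi) (by tauto)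

end Coeff

/-- The Taylor complex satisfies the Leibniz rule:
`∂(b_J · b_K) = ∂(b_J) · b_K + (−1)^{|J|} b_J · ∂(b_K)` for all `J, K ⊆ [n]`. -/
theorem taylor_leibniz {Q : Type*} [CommRing Q] {n d : ℕ}
    (x : Fin d → Q) (a : Fin n → Fin d → ℕ)
    (D : (Finset (Fin n) →₀ Q) →ₗ[Q] (Finset (Fin n) →₀ Q))
    (hD : ∀ J : Finset (Fin n), D (Finsupp.single J 1) =
      ∑ i ∈ J, Finsupp.single (J.erase i)
        ((taylorSgn {i} (J.erase i) : Q) * quotMonomial x a J (J.erase i)))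
    (mul : (Finset (Fin n) →₀ Q) →ₗ[Q] (Finset (Fin n) →₀ Q) →ₗ[Q] (Finset (Fin n) →₀ Q))
    (hmul : ∀ J K : Finset (Fin n), mul (Finsupp.single J 1) (Finsupp.single K 1) =
      if Disjoint J K then
        Finsupp.single (J ∪ K)
          ((taylorSgn J K : Q) * ∏ l, x l ^ (maxExp a J l + maxExp a K l - maxExp a (J ∪ K) l))
      else 0) :
    ∀ J K : Finset (Fin n),
      D (mul (Finsupp.single J 1) (Finsupp.single K 1)) =
        mul (D (Finsupp.single J 1)) (Finsupp.single K 1) +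
          ((-1 : Q) ^ J.card) • mul (Finsupp.single J 1) (D (Finsupp.single K 1)) := by
  intro J K
  have hD_single : ∀ (S : Finset (Fin n)) (c : Q), D (Finsupp.single S c) =
      ∑ i ∈ S, Finsupp.single (S.erase i) (c * taylorDiffCoeff x a S i) := by
    intro S c
    rw [← Finsupp.smul_single_one, map_smul, hD, smul_sum]
    simp only [Finsupp.smul_single', taylorDiffCoeff]
  have hmul_single : ∀ (S T : Finset (Fin n)) (c c' : Q),
      mul (Finsupp.single S c) (Finsupp.single T c') =
        Finsupp.single (S ∪ T) (c * c' * taylorMulCoeff x a S T) := by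
    intro S T c c'
    rw [← Finsupp.smul_single_one S, ← Finsupp.smul_single_one T, map_smul, map_smul,
      LinearMap.smul_apply, hmul]
    split_ifs with h
    · rw [Finsupp.smul_single', Finsupp.smul_single', taylorMulCoeff, taylorMulMonomial]
      ring_nf
    · simp [taylorMulCoeff_of_not_disjoint x a h]
  simp only [hmul_single, hD_single, map_sum, LinearMap.sum_apply, smul_sum,
    Finsupp.smul_single', one_mul, mul_one]
  rw [sum_congr rfl fun i hi => single_taylorMulCoeff_mul_taylorDiffCoeff x a hi, sum_add_distrib,
    sum_ite_mem, sum_ite_mem, union_inter_cancel_left, union_inter_cancel_right]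
end

section
/- Let Q be a unique factorization domain and let f₁, f₂ be nonzero elements of Q. Let d be a greatest common divisor of f₁ and f₂, and write f₁ = d·f₁' and f₂ = d·f₂'. Then the kernel of the Q-linear map Q² → Q given by (u,v) ↦ u·f₁ + v·f₂ is exactly the image of the Q-linear map Q → Q² given by q ↦ (−q·f₂', q·f₁'), and the latter map is injective. In other words, the Taylor complex 0 → Q → Q² → Q on f₁, f₂, with maps q ↦ (−q f₂', q f₁') and (u,v) ↦ u f₁ + v f₂, is exact at Q² and at the leftmost Q, and is hence a free resolution of Q/(f₁,f₂). -/
/-!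
Dividing out the gcd `d ≠ 0` turns the relation `u f₁ + v f₂ = 0` into `u f₁' + v f₂' = 0` with
`f₁'`, `f₂'` relatively prime. Then `f₁' ∣ v f₂'` forces `f₁' ∣ v`, say `v = q f₁'`, and
cancelling `f₁' ≠ 0` gives `u = -q f₂'`. Injectivity is cancellation of `f₁'` in the second
coordinate.
-/

theorem isRelPrime_of_forall_dvd_mul_dvd {M : Type*} [CommMonoidWithZero M] [IsCancelMulZero M]
    {d a b : M} (hd : d ≠ 0) (hgcd : ∀ e : M, e ∣ d * a → e ∣ d * b → e ∣ d) : IsRelPrime a b := by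
  intro e hea heb
  obtain ⟨c, hc⟩ := hgcd (d * e) (mul_dvd_mul_left d hea) (mul_dvd_mul_left d heb)
  have hec : e * c = 1 := mul_left_cancel₀ hd (by rw [← mul_assoc, ← hc, mul_one])
  exact .of_mul_eq_one c hec

theorem mul_add_mul_eq_zero_iff_of_isRelPrime {R : Type*} [CommRing R] [IsDomain R]
    [DecompositionMonoid R] {a b : R} (hab : IsRelPrime a b) (ha : a ≠ 0) (u v : R) :
    u * a + v * b = 0 ↔ ∃ q : R, u = -(q * b) ∧ v = q * a := by
  constructor
  · intro h
    obtain ⟨q, hq⟩ : a ∣ v := hab.dvd_of_dvd_mul_right ⟨-u, by linear_combination h⟩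
    refine ⟨q, ?_, by rw [hq, mul_comm]⟩
    have hu : a * (u + q * b) = 0 := by linear_combination h - b * hq
    linear_combination (mul_eq_zero.mp hu).resolve_left ha
  · rintro ⟨q, rfl, rfl⟩
    ring

theorem taylor_complex_two_generators_exact_general {Q : Type*} [CommRing Q] [IsDomain Q]
    [UniqueFactorizationMonoid Q]
    (f₁ f₂ d f₁' f₂' : Q) (hf₁ : f₁ ≠ 0)
    (hdgcd : ∀ e : Q, e ∣ f₁ → e ∣ f₂ → e ∣ d)
    (hf₁' : f₁ = d * f₁') (hf₂' : f₂ = d * f₂') :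
    Function.Injective (fun q : Q => (-(q * f₂'), q * f₁')) ∧
    ∀ u v : Q, u * f₁ + v * f₂ = 0 ↔ ∃ q : Q, u = -(q * f₂') ∧ v = q * f₁' := by
  subst hf₁' hf₂'
  have hd : d ≠ 0 := left_ne_zero_of_mul hf₁
  have hf₁'0 : f₁' ≠ 0 := right_ne_zero_of_mul hf₁
  have hrel : IsRelPrime f₁' f₂' := isRelPrime_of_forall_dvd_mul_dvd hd hdgcd
  refine ⟨fun q q' h => mul_left_injective₀ hf₁'0 (congrArg Prod.snd h), fun u v => ?_⟩
  have hfactor : u * (d * f₁') + v * (d * f₂') = d * (u * f₁' + v * f₂') := by ring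
  rw [hfactor, mul_eq_zero, or_iff_right hd]
  exact mul_add_mul_eq_zero_iff_of_isRelPrime hrel hf₁'0 u v

/-- Let `Q` be a UFD and `f₁, f₂` nonzero elements, `d` a gcd of `f₁, f₂`, with
`f₁ = d·f₁'` and `f₂ = d·f₂'`. Then the map `q ↦ (−q·f₂', q·f₁')` is injective and its image
is exactly the kernel of `(u,v) ↦ u·f₁ + v·f₂`; i.e. the Taylor complex
`0 → Q → Q² → Q` on `f₁, f₂` is exact at `Q²` and at the leftmost `Q`, hence a free
resolution of `Q/(f₁,f₂)`. -/
theorem taylor_complex_two_generators_exact {Q : Type*} [CommRing Q] [IsDomain Q]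
    [UniqueFactorizationMonoid Q]
    (f₁ f₂ d f₁' f₂' : Q) (hf₁ : f₁ ≠ 0) (hf₂ : f₂ ≠ 0)
    (hd₁ : d ∣ f₁) (hd₂ : d ∣ f₂) (hdgcd : ∀ e : Q, e ∣ f₁ → e ∣ f₂ → e ∣ d)
    (hf₁' : f₁ = d * f₁') (hf₂' : f₂ = d * f₂') :
    Function.Injective (fun q : Q => (-(q * f₂'), q * f₁')) ∧
    ∀ u v : Q, u * f₁ + v * f₂ = 0 ↔ ∃ q : Q, u = -(q * f₂') ∧ v = q * f₁' :=
  taylor_complex_two_generators_exact_general f₁ f₂ d f₁' f₂' hf₁ hdgcd hf₁' hf₂'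
end

section
/- Let k be a field and Q = k⟦a,b,c,d⟧ the formal power series ring in four variables. Set f₁ = c², f₂ = cd, f₃ = a²c + d³, f₄ = b²d + ad², f₅ = ab, and I = (f₁,…,f₅). Let J = (f₁, f₂, f₃ + d·f₅, f₄ + c·f₅). Then I = J + (f₅), and the image of f₅ = ab in the quotient ring Q/J is a nonzerodivisor. Consequently, J and f₅ determine an embedded deformation of R = Q/I of codimension 1. -/
/-!
Write `a, b, c, d` for the variables, `U = d² + ab`, `V = b² + ad`, `W = a² - bd` and
`K = (U, V, W)`; the generators of `J` are `c²`, `cd`, `a²c + dU` and `abc + dV`. Everything is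
reduced to explicit identities by setting variables to zero and cancelling variables in the
domain `Q`. First, `d` is a nonzerodivisor modulo `K`, hence so is `ab ≡ -d²`. If `x·ab ∈ J`,
setting `c = 0` shows that the `c`-free part of `x` is `d·y` with `y·ab ∈ K`, so `y ∈ K`.
Comparing coefficients of `c` at `c = d = 0` then ties the `c`-linear part of `x` to `y`, and
modulo `(c², cd)` this exhibits `x` as `d(αU + βV) + c(a²α + abβ)|_{c=d=0}`, an element of `J`.
-/

open MvPowerSeries

namespace MvPowerSeries

section CommSemiring

variable {σ R : Type*} [CommSemiring R]

noncomputable def killVars (s : Set σ) : MvPowerSeries σ R →ₐ[R] MvPowerSeries σ R :=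
  (rename (Function.Embedding.subtype (· ∉ s))).comp
    (killCompl (Function.Embedding.subtype (· ∉ s)))

theorem mem_range_embDomain_subtype_iff {s : Set σ} {m : σ →₀ ℕ} :
    m ∈ Set.range (Finsupp.embDomain (Function.Embedding.subtype (· ∉ s))) ↔
      ∀ i ∈ s, m i = 0 := by
  rw [Finsupp.mem_range_embDomain_iff]
  simp only [Set.subset_def, Finset.mem_coe, Finsupp.mem_support_iff,
    Function.Embedding.coe_subtype, Subtype.range_coe_subtype, Set.mem_ofPred_eq]
  exact ⟨fun h i hi => by_contra fun hm => h i hm hi, fun h i hm hi => hm (h i hi)⟩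

theorem coeff_killVars_of_forall {s : Set σ} {m : σ →₀ ℕ} (h : ∀ i ∈ s, m i = 0)
    (p : MvPowerSeries σ R) : coeff m (killVars s p) = coeff m p := by
  obtain ⟨m', rfl⟩ := mem_range_embDomain_subtype_iff.2 h
  rw [killVars, AlgHom.comp_apply, coeff_embDomain_rename, coeff_killCompl]

theorem coeff_killVars_of_ne_zero {s : Set σ} {m : σ →₀ ℕ} {i : σ} (hi : i ∈ s)
    (h : m i ≠ 0) (p : MvPowerSeries σ R) : coeff m (killVars s p) = 0 := by
  refine coeff_rename_eq_zero _ _ ?_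
  rintro ⟨m', rfl⟩
  rw [← Finsupp.embDomain_eq_mapDomain] at h
  exact h (mem_range_embDomain_subtype_iff.1 ⟨m', rfl⟩ i hi)

@[simp]
theorem killVars_X_of_mem {s : Set σ} {i : σ} (hi : i ∈ s) :
    killVars s (X i : MvPowerSeries σ R) = 0 := by
  rw [killVars, AlgHom.comp_apply, killCompl_X_eq_zero (by simpa using hi), map_zero]

@[simp]
theorem killVars_X_of_notMem {s : Set σ} {i : σ} (hi : i ∉ s) :
    killVars s (X i : MvPowerSeries σ R) = X i := by
  rw [killVars, AlgHom.comp_apply]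
  exact (congrArg _ (killCompl_X (e := Function.Embedding.subtype (· ∉ s)) ⟨i, hi⟩)).trans
    (rename_X _ _)

theorem killVars_killVars (s t : Set σ) (p : MvPowerSeries σ R) :
    killVars s (killVars t p) = killVars (s ∪ t) p := by
  ext m
  by_cases hs : ∀ i ∈ s, m i = 0
  · by_cases ht : ∀ i ∈ t, m i = 0
    · rw [coeff_killVars_of_forall hs, coeff_killVars_of_forall ht,
        coeff_killVars_of_forall fun i hi => hi.elim (hs i) (ht i)]
    · push Not at ht
      obtain ⟨i, hi, hmi⟩ := ht
      rw [coeff_killVars_of_forall hs, coeff_killVars_of_ne_zero hi hmi,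
        coeff_killVars_of_ne_zero (Set.mem_union_right s hi) hmi]
  · push Not at hs
    obtain ⟨i, hi, hmi⟩ := hs
    rw [coeff_killVars_of_ne_zero hi hmi,
      coeff_killVars_of_ne_zero (Set.mem_union_left t hi) hmi]

@[simp]
theorem killVars_killVars_of_subset {s t : Set σ} (h : t ⊆ s) (p : MvPowerSeries σ R) :
    killVars s (killVars t p) = killVars s p := by
  rw [killVars_killVars, Set.union_eq_left.2 h]

end CommSemiring

section CommRing

variable {σ R : Type*} [CommRing R]

theorem X_dvd_sub_killVars (i : σ) (p : MvPowerSeries σ R) : X i ∣ p - killVars {i} p := by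
  refine X_dvd_iff.2 fun m hm => ?_
  rw [map_sub, coeff_killVars_of_forall (by simpa using hm), sub_self]

theorem X_dvd_iff_killVars_eq_zero {i : σ} {p : MvPowerSeries σ R} :
    X i ∣ p ↔ killVars {i} p = 0 := by
  refine ⟨fun ⟨q, hq⟩ => by simp [hq], fun h => ?_⟩
  simpa [h] using X_dvd_sub_killVars i p

theorem exists_eq_killVars_pair_add (i j : σ) (p : MvPowerSeries σ R) :
    ∃ u v, p = killVars {i, j} p + X i * u + X j * v := by
  obtain ⟨u, hu⟩ := X_dvd_sub_killVars i p
  obtain ⟨v, hv⟩ := X_dvd_sub_killVars j (killVars {i} p)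
  rw [killVars_killVars, ← Set.insert_eq, Set.pair_comm] at hv
  exact ⟨u, v, by linear_combination hu + hv⟩

theorem X_ne_zero [Nontrivial R] (i : σ) : (X i : MvPowerSeries σ R) ≠ 0 := by
  classical
  intro h
  simpa [coeff_X] using congrArg (coeff (Finsupp.single i 1)) h

end CommRing

end MvPowerSeries

namespace Ideal

variable {R : Type*} [CommRing R]

theorem mem_span_quadruple {v w x y z : R} :
    v ∈ span {w, x, y, z} ↔ ∃ a b c d, a * w + b * x + c * y + d * z = v := by
  rw [mem_span_insert]
  simp_rw [Submodule.mem_span_triple, smul_eq_mul]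
  refine exists_congr fun a ↦ ⟨?_, ?_⟩
  · rintro ⟨u, ⟨b, c, d, rfl⟩, rfl⟩
    exact ⟨b, c, d, by ring⟩
  · rintro ⟨b, c, d, rfl⟩
    exact ⟨b * x + c * y + d * z, ⟨b, c, d, rfl⟩, by ring⟩

theorem span_five_eq_sup_span_add_mul (x₁ x₂ x₃ x₄ y u v : R) :
    span {x₁, x₂, x₃, x₄, y} = span {x₁, x₂, x₃ + u * y, x₄ + v * y} ⊔ span {y} := by
  set J := span {x₁, x₂, x₃ + u * y, x₄ + v * y}
  have hy : y ∈ J ⊔ span {y} := mem_sup_right (mem_span_singleton_self y)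
  have hJ : ∀ z ∈ ({x₁, x₂, x₃ + u * y, x₄ + v * y} : Set R), z ∈ J ⊔ span {y} :=
    fun z hz => mem_sup_left (subset_span hz)
  have hy' : y ∈ span {x₁, x₂, x₃, x₄, y} := subset_span (by simp)
  refine le_antisymm (span_le.2 ?_) (sup_le (span_le.2 ?_) (span_le.2 ?_)) <;>
    simp only [Set.insert_subset_iff, Set.singleton_subset_iff, SetLike.mem_coe]
  · refine ⟨hJ _ (by simp), hJ _ (by simp), ?_, ?_, hy⟩
    · simpa using sub_mem (hJ (x₃ + u * y) (by simp)) (mul_mem_left _ u hy)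
    · simpa using sub_mem (hJ (x₄ + v * y) (by simp)) (mul_mem_left _ v hy)
  · refine ⟨subset_span (by simp), subset_span (by simp), ?_, ?_⟩
    · exact add_mem (subset_span (by simp)) (mul_mem_left _ u hy')
    · exact add_mem (subset_span (by simp)) (mul_mem_left _ v hy')
  · exact hy'

theorem Quotient.mk_mem_nonZeroDivisors_iff {I : Ideal R} {f : R} :
    Quotient.mk I f ∈ nonZeroDivisors (R ⧸ I) ↔ ∀ x, x * f ∈ I → x ∈ I := by
  rw [mem_nonZeroDivisors_iff_right, Quotient.mk_surjective.forall]
  simp only [← map_mul, Quotient.eq_zero_iff_mem]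

end Ideal

section IyengarExample

variable {R : Type*} [CommRing R]

local notation "Xa" => (X 0 : MvPowerSeries (Fin 4) R)
local notation "Xb" => (X 1 : MvPowerSeries (Fin 4) R)
local notation "Xc" => (X 2 : MvPowerSeries (Fin 4) R)
local notation "Xd" => (X 3 : MvPowerSeries (Fin 4) R)
local notation "U" => Xd ^ 2 + Xa * Xb
local notation "V" => Xb ^ 2 + Xa * Xd
local notation "W" => Xa ^ 2 - Xb * Xd
local notation "K" => Ideal.span {U, V, W}
local notation "G₃" => Xa ^ 2 * Xc + Xd ^ 3 + Xd * (Xa * Xb)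
local notation "G₄" => Xb ^ 2 * Xd + Xa * Xd ^ 2 + Xc * (Xa * Xb)
local notation "J" => Ideal.span {Xc ^ 2, Xc * Xd, G₃, G₄}
local notation "ρ" => killVars {2, 3}

-- This is `r G₃ + s G₄` modulo `(c², cd)`.
theorem d_mul_add_c_mul_mem_J (r s : MvPowerSeries (Fin 4) R) :
    Xd * (r * U + s * V) + Xc * (Xa ^ 2 * ρ r + Xa * Xb * ρ s) ∈ J := by
  obtain ⟨r₁, r₂, hr⟩ := exists_eq_killVars_pair_add 2 3 r
  obtain ⟨s₁, s₂, hs⟩ := exists_eq_killVars_pair_add 2 3 s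
  refine Ideal.mem_span_quadruple.2
    ⟨-(Xa ^ 2 * r₁ + Xa * Xb * s₁), -(Xa ^ 2 * r₂ + Xa * Xb * s₂), r, s, ?_⟩
  linear_combination Xc * Xa ^ 2 * hr + Xc * Xa * Xb * hs

variable {p q r s x : MvPowerSeries (Fin 4) R}

theorem killVars_c_mul_ab
    (hE : p * Xc ^ 2 + q * (Xc * Xd) + r * G₃ + s * G₄ = x * (Xa * Xb)) :
    killVars {2} x * (Xa * Xb) = Xd * (killVars {2} r * U + killVars {2} s * V) := by
  have hπ : killVars {2} r * (Xd ^ 3 + Xd * (Xa * Xb)) +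
      killVars {2} s * (Xb ^ 2 * Xd + Xa * Xd ^ 2) = killVars {2} x * (Xa * Xb) := by
    simpa using congrArg (killVars {2}) hE
  linear_combination -hπ

variable [IsDomain R]

theorem mem_K_of_d_mul_mem {e : MvPowerSeries (Fin 4) R} (he : Xd * e ∈ K) : e ∈ K := by
  obtain ⟨p, q, r, hpqr⟩ := Submodule.mem_span_triple.1 he
  simp only [smul_eq_mul] at hpqr
  have hd : killVars {3} p * (Xa * Xb) + killVars {3} q * Xb ^ 2 +
      killVars {3} r * Xa ^ 2 = 0 := by
    simpa using congrArg (killVars {3}) hpqr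
  obtain ⟨q₁, hq₁⟩ : Xa ∣ killVars {3} q := by
    rw [X_dvd_iff_killVars_eq_zero]
    simpa [X_ne_zero] using congrArg (killVars {0}) hd
  obtain ⟨r₁, hr₁⟩ : Xb ∣ killVars {3} r := by
    rw [X_dvd_iff_killVars_eq_zero]
    simpa [X_ne_zero] using congrArg (killVars {1}) hd
  have hp : killVars {3} p = -(Xb * q₁) - Xa * r₁ := by
    refine mul_right_cancel₀ (mul_ne_zero (X_ne_zero 0) (X_ne_zero 1)) ?_
    linear_combination hd - Xb ^ 2 * hq₁ - Xa ^ 2 * hr₁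
  obtain ⟨p', hp'⟩ := X_dvd_sub_killVars 3 p
  obtain ⟨q', hq'⟩ := X_dvd_sub_killVars 3 q
  obtain ⟨r', hr'⟩ := X_dvd_sub_killVars 3 r
  have he' : e = p' * U + (q' - r₁) * V + (r' + q₁) * W := by
    refine mul_left_cancel₀ (X_ne_zero 3) ?_
    linear_combination -hpqr + U * (hp' + hp) + V * (hq' + hq₁) + W * (hr' + hr₁)
  exact Submodule.mem_span_triple.2 ⟨_, _, _, he'.symm⟩

theorem mem_K_of_mul_ab_mem {y : MvPowerSeries (Fin 4) R} (hy : y * (Xa * Xb) ∈ K) :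
    y ∈ K := by
  refine mem_K_of_d_mul_mem (mem_K_of_d_mul_mem ?_)
  have hU : y * U ∈ K := Ideal.mul_mem_left _ _ (Ideal.subset_span (by simp))
  convert sub_mem hU hy using 1
  ring

theorem exists_killVars_c_eq_d_mul
    (hE : p * Xc ^ 2 + q * (Xc * Xd) + r * G₃ + s * G₄ = x * (Xa * Xb)) :
    ∃ y, killVars {2} x = Xd * y ∧
      y * (Xa * Xb) = killVars {2} r * U + killVars {2} s * V := by
  have hπ := killVars_c_mul_ab hE
  obtain ⟨y, hy⟩ : Xd ∣ killVars {2} x := by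
    rw [X_dvd_iff_killVars_eq_zero]
    simpa [X_ne_zero] using congrArg (killVars {3}) hπ
  refine ⟨y, hy, mul_left_cancel₀ (X_ne_zero 3) ?_⟩
  linear_combination hπ - (Xa * Xb) * hy

theorem killVars_cd_mul_ab
    (hE : p * Xc ^ 2 + q * (Xc * Xd) + r * G₃ + s * G₄ = x * (Xa * Xb))
    {x₂ : MvPowerSeries (Fin 4) R} (hx₂ : x - killVars {2} x = Xc * x₂) :
    ρ x₂ * (Xa * Xb) = Xa ^ 2 * ρ r + Xa * Xb * ρ s := by
  obtain ⟨r₂, hr₂⟩ := X_dvd_sub_killVars 2 r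
  obtain ⟨s₂, hs₂⟩ := X_dvd_sub_killVars 2 s
  have hc : x₂ * (Xa * Xb) = p * Xc + q * Xd + Xa ^ 2 * killVars {2} r +
      Xa * Xb * killVars {2} s + r₂ * G₃ + s₂ * G₄ := by
    refine mul_left_cancel₀ (X_ne_zero 2) ?_
    linear_combination -hE - killVars_c_mul_ab hE - (Xa * Xb) * hx₂ + G₃ * hr₂ + G₄ * hs₂
  simpa using congrArg ρ hc

theorem exists_eq_add_c_mul_of_mem_K {y z : MvPowerSeries (Fin 4) R} (hy : y ∈ K)
    (hz : Xb * z = Xa * ρ y) :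
    ∃ α β w, y = α * U + β * V + Xc * w ∧ z = Xa ^ 2 * ρ α + Xa * Xb * ρ β := by
  obtain ⟨t₁, t₂, h, rfl⟩ := Submodule.mem_span_triple.1 hy
  simp only [smul_eq_mul] at hz ⊢
  have hz' : Xb * z = Xa * (ρ t₁ * (Xa * Xb) + ρ t₂ * Xb ^ 2 + ρ h * Xa ^ 2) := by
    simpa using hz
  obtain ⟨g, hg⟩ : Xb ∣ ρ h := by
    rw [X_dvd_iff_killVars_eq_zero]
    simpa [X_ne_zero] using congrArg (killVars {1}) hz'
  have hρg : ρ g = g := by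
    have h' := congrArg ρ hg
    rw [killVars_killVars_of_subset subset_rfl, map_mul, killVars_X_of_notMem (by simp), hg]
      at h'
    exact (mul_left_cancel₀ (X_ne_zero 1) h').symm
  obtain ⟨h₂, h₃, hh⟩ := exists_eq_killVars_pair_add 2 3 h
  -- `bW = aU - dV` and `dW = aV - bU`
  refine ⟨t₁ + Xa * g - Xb * h₃, t₂ + Xa * h₃ - Xd * g, h₂ * W, ?_, ?_⟩
  · linear_combination W * (hh + hg)
  · have hρα : ρ (t₁ + Xa * g - Xb * h₃) = ρ t₁ + Xa * g - Xb * ρ h₃ := by simp [hρg]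
    have hρβ : ρ (t₂ + Xa * h₃ - Xd * g) = ρ t₂ + Xa * ρ h₃ := by simp
    rw [hρα, hρβ]
    refine mul_left_cancel₀ (X_ne_zero 1) ?_
    linear_combination hz' + Xa ^ 3 * hg

theorem mem_J_of_mul_ab_mem (hx : x * (Xa * Xb) ∈ J) : x ∈ J := by
  obtain ⟨p, q, r, s, hE⟩ := Ideal.mem_span_quadruple.1 hx
  obtain ⟨y, hy, hyab⟩ := exists_killVars_c_eq_d_mul hE
  obtain ⟨x₂, hx₂⟩ := X_dvd_sub_killVars 2 x
  have hρx₂ := killVars_cd_mul_ab hE hx₂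
  have hyK : y ∈ K := mem_K_of_mul_ab_mem <|
    Submodule.mem_span_triple.2 ⟨killVars {2} r, killVars {2} s, 0, by simp [hyab]⟩
  have hbz : Xb * ρ x₂ = Xa * ρ y := by
    refine mul_right_cancel₀ (mul_ne_zero (X_ne_zero 0) (X_ne_zero 1)) ?_
    have hρy : ρ y * (Xa * Xb) = ρ r * (Xa * Xb) + ρ s * Xb ^ 2 := by
      simpa using congrArg ρ hyab
    linear_combination Xb * hρx₂ - Xa * hρy
  obtain ⟨α, β, w, hyαβ, hz⟩ := exists_eq_add_c_mul_of_mem_K hyK hbz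
  obtain ⟨u, v, hu⟩ := exists_eq_killVars_pair_add 2 3 x₂
  have hx : x = (Xd * (α * U + β * V) + Xc * (Xa ^ 2 * ρ α + Xa * Xb * ρ β)) +
      (u * Xc ^ 2 + (v + w) * (Xc * Xd)) := by
    linear_combination hx₂ + hy + Xd * hyαβ + Xc * hu + Xc * hz
  rw [hx]
  exact add_mem (d_mul_add_c_mul_mem_J α β)
    (Ideal.mem_span_quadruple.2 ⟨u, v + w, 0, 0, by ring⟩)

end IyengarExample

/-- Iyengar's example: in `Q = k⟦a,b,c,d⟧` with
`f₁ = c², f₂ = cd, f₃ = a²c + d³, f₄ = b²d + ad², f₅ = ab`,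
`I = (f₁,…,f₅)` and `J = (f₁, f₂, f₃ + d f₅, f₄ + c f₅)`, one has `I = J + (f₅)` and the
image of `f₅` in `Q/J` is a nonzerodivisor; so `J` and `f₅` determine an embedded
deformation of `R = Q/I` of codimension `1`. -/
theorem iyengar_embedded_deformation {k : Type*} [Field k]
    (a b c d : MvPowerSeries (Fin 4) k)
    (hA : a = X 0) (hB : b = X 1) (hC : c = X 2) (hD : d = X 3)
    (f₁ f₂ f₃ f₄ f₅ : MvPowerSeries (Fin 4) k)
    (h1 : f₁ = c ^ 2) (h2 : f₂ = c * d) (h3 : f₃ = a ^ 2 * c + d ^ 3)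
    (h4 : f₄ = b ^ 2 * d + a * d ^ 2) (h5 : f₅ = a * b)
    (I J : Ideal (MvPowerSeries (Fin 4) k))
    (hI : I = Ideal.span {f₁, f₂, f₃, f₄, f₅})
    (hJ : J = Ideal.span {f₁, f₂, f₃ + d * f₅, f₄ + c * f₅}) :
    I = J ⊔ Ideal.span {f₅} ∧
      Ideal.Quotient.mk J f₅ ∈ nonZeroDivisors (MvPowerSeries (Fin 4) k ⧸ J) := by
  subst hA hB hC hD h1 h2 h3 h4 h5 hI hJ
  exact ⟨Ideal.span_five_eq_sup_span_add_mul _ _ _ _ _ _ _,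
    Ideal.Quotient.mk_mem_nonZeroDivisors_iff.2 fun _ => mem_J_of_mul_ab_mem⟩
end
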